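/- arXiv:2406.07186 — 7 statements merged into one kernel-verified Lean document; each statement's English description precedes it below -/
import Mathlib

section
/- Let Ω be a finite state space with |Ω| ≥ 3 and let X: Ω → ℝ be a non-constant security. Then X is separable under every information structure (for any number n ≥ 1 of traders) possessing the fine-join property if and only if X is an Arrow–Debreu security or of three-value form. -/
noncomputable section
open scoped Classical
open Finset

/-- A partition of `Ω` given by its cell map: `C ω` is the cell containing `ω`. -/
def IsPartitionFun {Ω : Type*} (C : Ω → Set Ω) : Prop :=
  (∀ ω, ω ∈ C ω) ∧ ∀ ω ω', ω' ∈ C ω → C ω' = C ω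

/-- The fine-join property: the intersection of all traders' cells at `ω` is `{ω}`. -/
def FineJoin {Ω : Type*} {n : ℕ} (C : Fin n → Ω → Set Ω) : Prop :=
  ∀ ω ω', (∀ i, ω' ∈ C i ω) → ω' = ω

/-- A prior: a probability distribution on the finite state space. -/
def IsPrior {Ω : Type*} [Fintype Ω] (μ : Ω → ℝ) : Prop :=
  (∀ ω, 0 ≤ μ ω) ∧ ∑ ω, μ ω = 1

/-- Support of a prior. -/
def suppSet {Ω : Type*} (μ : Ω → ℝ) : Set Ω := {ω | 0 < μ ω}

/-- Conditional expectation `E_μ[X | S]`. -/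
def condExp {Ω : Type*} [Fintype Ω] (μ X : Ω → ℝ) (S : Set Ω) : ℝ :=
  (∑ ω, if ω ∈ S then μ ω * X ω else 0) / (∑ ω, if ω ∈ S then μ ω else 0)

/-- `X` is non-separable at prior `μ` with value `v` under the information structure `C`. -/
def NonSeparableAt {Ω : Type*} [Fintype Ω] {n : ℕ}
    (C : Fin n → Ω → Set Ω) (X μ : Ω → ℝ) (v : ℝ) : Prop :=
  (∃ ω ∈ suppSet μ, X ω ≠ v) ∧
  ∀ (i : Fin n) (ω : Ω), ω ∈ suppSet μ → condExp μ X (C i ω) = v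

/-- `X` is separable under the information structure `C`. -/
def SeparableSec {Ω : Type*} [Fintype Ω] {n : ℕ}
    (C : Fin n → Ω → Set Ω) (X : Ω → ℝ) : Prop :=
  ¬ ∃ (μ : Ω → ℝ) (v : ℝ), IsPrior μ ∧ NonSeparableAt C X μ v

/-- Arrow–Debreu security: pays `a` at one state, `b ≠ a` at all other states. -/
def ArrowDebreu {Ω : Type*} (X : Ω → ℝ) : Prop :=
  ∃ (a b : ℝ) (ωs : Ω), a ≠ b ∧ X ωs = a ∧ ∀ ω, ω ≠ ωs → X ω = b

/-- Three-value form: pays `a < b < d` with `a` at one state, `d` at another, `b` elsewhere. -/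
def ThreeValueForm {Ω : Type*} (X : Ω → ℝ) : Prop :=
  ∃ (a b d : ℝ) (ωa ωd : Ω), a < b ∧ b < d ∧ ωa ≠ ωd ∧
    X ωa = a ∧ X ωd = d ∧ ∀ ω, ω ≠ ωa → ω ≠ ωd → X ω = b

/-! If, for some `b`, at most one state pays more than `b` and at most one pays less (this is
exactly the Arrow–Debreu and three-value forms), then whatever common value `v` the conditional
expectations take, `X - v` has constant sign off a single state. A cell on which `X - v` has
constant sign and conditional expectation `v` has `X = v` on its support, and the fine join supplies
such cells around every state, so `X = v` on the whole support.

Otherwise two states pay strictly more and two strictly less than some `v`. Pair them alternately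
into cells `{ω₁, ω₂}, {ω₃, ω₄}` of one trader and `{ω₂, ω₃}, {ω₄, ω₁}` of another; weighting each
`ωₖ` by `|X ωₖ - v|⁻¹` balances every pair, so all conditional expectations equal `v`. -/

section

variable {Ω : Type*}

section CondExp

variable [Fintype Ω] (μ X : Ω → ℝ) (v : ℝ) (S : Set Ω)

def weightedExcess : ℝ := ∑ ω, if ω ∈ S then μ ω * (X ω - v) else 0

variable {μ X v S}

lemma condExp_eq_iff_weightedExcess_eq_zero (hS : (∑ ω, if ω ∈ S then μ ω else 0) ≠ 0) :
    condExp μ X S = v ↔ weightedExcess μ X v S = 0 := by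
  have hexcess : weightedExcess μ X v S =
      (∑ ω, if ω ∈ S then μ ω * X ω else 0) - v * ∑ ω, if ω ∈ S then μ ω else 0 := by
    rw [weightedExcess, Finset.mul_sum, ← Finset.sum_sub_distrib]
    refine Finset.sum_congr rfl fun ω _ => ?_
    split_ifs <;> ring
  rw [hexcess, condExp, div_eq_iff hS, sub_eq_zero]

lemma sum_ite_mem_pos (hμ : ∀ ω, 0 ≤ μ ω) {ω : Ω} (hω : ω ∈ S) (hpos : 0 < μ ω) :
    0 < ∑ ω, if ω ∈ S then μ ω else 0 :=
  Finset.sum_pos' (fun ω' _ => by split_ifs <;> simp [hμ ω'])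
    ⟨ω, Finset.mem_univ _, by simpa [hω] using hpos⟩

lemma condExp_eq_iff_weightedExcess_eq_zero_of_mem (hμ : ∀ ω, 0 ≤ μ ω) {ω : Ω} (hω : ω ∈ S)
    (hpos : 0 < μ ω) :
    condExp μ X S = v ↔ weightedExcess μ X v S = 0 :=
  condExp_eq_iff_weightedExcess_eq_zero (sum_ite_mem_pos hμ hω hpos).ne'

lemma weightedExcess_div_const (c : ℝ) :
    weightedExcess (fun ω => μ ω / c) X v S = weightedExcess μ X v S / c := by
  rw [weightedExcess, weightedExcess, Finset.sum_div]
  refine Finset.sum_congr rfl fun ω _ => ?_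
  split_ifs <;> ring

lemma weightedExcess_add (ν : Ω → ℝ) :
    weightedExcess (μ + ν) X v S = weightedExcess μ X v S + weightedExcess ν X v S := by
  rw [weightedExcess, weightedExcess, weightedExcess, ← Finset.sum_add_distrib]
  refine Finset.sum_congr rfl fun ω _ => ?_
  split_ifs <;> simp [add_mul]

lemma weightedExcess_single (p : Ω) (c : ℝ) :
    weightedExcess (Pi.single p c) X v S = if p ∈ S then c * (X p - v) else 0 := by
  rw [weightedExcess, Finset.sum_eq_single p (fun ω _ hω => by simp [hω]) (by simp)]
  simp

lemma eq_of_condExp_eq_of_one_sided (hμ : ∀ ω, 0 ≤ μ ω) {ω : Ω} (hω : ω ∈ S) (hpos : 0 < μ ω)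
    (hE : condExp μ X S = v)
    (hside : (∀ ω ∈ S, 0 < μ ω → X ω ≤ v) ∨ (∀ ω ∈ S, 0 < μ ω → v ≤ X ω)) :
    X ω = v := by
  have hzero := (condExp_eq_iff_weightedExcess_eq_zero_of_mem hμ hω hpos).1 hE
  have hterm : (if ω ∈ S then μ ω * (X ω - v) else 0) = 0 := by
    rcases hside with hle | hge
    · refine (Finset.sum_eq_zero_iff_of_nonpos fun ω' _ => ?_).1 hzero ω (Finset.mem_univ _)
      split_ifs with hω'
      · rcases (hμ ω').eq_or_lt with h0 | hpos'
        · simp [← h0]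
        · exact mul_nonpos_of_nonneg_of_nonpos (hμ ω') (by linarith [hle ω' hω' hpos'])
      · exact le_rfl
    · refine (Finset.sum_eq_zero_iff_of_nonneg fun ω' _ => ?_).1 hzero ω (Finset.mem_univ _)
      split_ifs with hω'
      · rcases (hμ ω').eq_or_lt with h0 | hpos'
        · simp [← h0]
        · exact mul_nonneg (hμ ω') (by linarith [hge ω' hω' hpos'])
      · exact le_rfl
  rw [if_pos hω, mul_eq_zero, sub_eq_zero] at hterm
  exact hterm.resolve_left hpos.ne'

end CondExp

lemma FineJoin.exists_notMem {n : ℕ} {C : Fin n → Ω → Set Ω} (hFJ : FineJoin C) {ω ω' : Ω}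
    (hne : ω' ≠ ω) : ∃ i, ω' ∉ C i ω := by
  by_contra! h
  exact hne (hFJ ω ω' h)

/-- Away from `ω₀`, use a cell that excludes `ω₀`; then the cell of `ω₀` is one-sided too. -/
lemma FineJoin.eq_of_condExp_eq [Fintype Ω] {n : ℕ} {C : Fin n → Ω → Set Ω} (hFJ : FineJoin C)
    (hmem : ∀ i ω, ω ∈ C i ω) (i₀ : Fin n) {μ X : Ω → ℝ} {v : ℝ} (hμ : ∀ ω, 0 ≤ μ ω)
    (hE : ∀ i ω, ω ∈ suppSet μ → condExp μ X (C i ω) = v) {ω₀ : Ω}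
    (hside : (∀ ω, ω ≠ ω₀ → X ω ≤ v) ∨ (∀ ω, ω ≠ ω₀ → v ≤ X ω))
    {ω : Ω} (hω : ω ∈ suppSet μ) : X ω = v := by
  have off : ∀ ω ∈ suppSet μ, ω ≠ ω₀ → X ω = v := by
    intro ω hω hne
    obtain ⟨i, hi⟩ := hFJ.exists_notMem hne.symm
    refine eq_of_condExp_eq_of_one_sided hμ (hmem i ω) hω (hE i ω hω) ?_
    rcases hside with hle | hge
    · exact .inl fun ω' hω' _ => hle ω' (ne_of_mem_of_not_mem hω' hi)
    · exact .inr fun ω' hω' _ => hge ω' (ne_of_mem_of_not_mem hω' hi)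
  rcases eq_or_ne ω ω₀ with rfl | hne
  · refine eq_of_condExp_eq_of_one_sided hμ (hmem i₀ ω) hω (hE i₀ ω hω) ?_
    rcases le_total (X ω) v with hle | hge
    · refine .inl fun ω' _ hω' => ?_
      rcases eq_or_ne ω' ω with rfl | hne'
      exacts [hle, (off ω' hω' hne').le]
    · refine .inr fun ω' _ hω' => ?_
      rcases eq_or_ne ω' ω with rfl | hne'
      exacts [hge, (off ω' hω' hne').ge]
  · exact off ω hω hne

def AtMostOneAboveOneBelow (X : Ω → ℝ) : Prop :=
  ∃ b ωa ωd, (∀ ω, ω ≠ ωa → b ≤ X ω) ∧ ∀ ω, ω ≠ ωd → X ω ≤ b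

lemma AtMostOneAboveOneBelow.separableSec [Fintype Ω] {X : Ω → ℝ}
    (hX : AtMostOneAboveOneBelow X) {n : ℕ} {C : Fin n → Ω → Set Ω}
    (hFJ : FineJoin C) (hmem : ∀ i ω, ω ∈ C i ω) (i₀ : Fin n) : SeparableSec C X := by
  rintro ⟨μ, v, ⟨hμ, -⟩, ⟨ω, hω, hXω⟩, hE⟩
  obtain ⟨b, ωa, ωd, hge, hle⟩ := hX
  refine hXω (hFJ.eq_of_condExp_eq hmem i₀ hμ hE (ω₀ := if b ≤ v then ωd else ωa) ?_ hω)
  split_ifs with hbv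
  · exact .inl fun ω' hω' => (hle ω' hω').trans hbv
  · exact .inr fun ω' hω' => (not_le.1 hbv).le.trans (hge ω' hω')

lemma atMostOneAboveOneBelow_of_arrowDebreu_or_threeValueForm {X : Ω → ℝ}
    (hX : ArrowDebreu X ∨ ThreeValueForm X) : AtMostOneAboveOneBelow X := by
  rcases hX with ⟨-, b, ωs, -, -, hb⟩ | ⟨a, b, d, ωa, ωd, hab, hbd, -, hXa, hXd, hb⟩
  · exact ⟨b, ωs, ωs, fun ω hω => (hb ω hω).ge, fun ω hω => (hb ω hω).le⟩
  · refine ⟨b, ωa, ωd, fun ω hωa => ?_, fun ω hωd => ?_⟩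
    · rcases eq_or_ne ω ωd with rfl | hωd
      exacts [hXd ▸ hbd.le, (hb ω hωa hωd).ge]
    · rcases eq_or_ne ω ωa with rfl | hωa
      exacts [hXa ▸ hab.le, (hb ω hωa hωd).le]

lemma arrowDebreu_of_forall_ne_eq {X : Ω → ℝ} (hnc : ¬ ∃ cst : ℝ, ∀ ω, X ω = cst) {ωs : Ω} {b : ℝ}
    (hb : ∀ ω, ω ≠ ωs → X ω = b) : ArrowDebreu X := by
  refine ⟨X ωs, b, ωs, fun h => hnc ⟨b, fun ω => ?_⟩, rfl, hb⟩
  rcases eq_or_ne ω ωs with rfl | hω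
  exacts [h, hb ω hω]

lemma AtMostOneAboveOneBelow.arrowDebreu_or_threeValueForm {X : Ω → ℝ}
    (hX : AtMostOneAboveOneBelow X) (hnc : ¬ ∃ cst : ℝ, ∀ ω, X ω = cst) :
    ArrowDebreu X ∨ ThreeValueForm X := by
  obtain ⟨b, ωa, ωd, hge, hle⟩ := hX
  have hb : ∀ ω, ω ≠ ωa → ω ≠ ωd → X ω = b := fun ω ha hd => (hle ω hd).antisymm (hge ω ha)
  by_cases had : ωa = ωd
  · subst had
    exact .inl (arrowDebreu_of_forall_ne_eq hnc fun ω hω => hb ω hω hω)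
  rcases (hle ωa had).eq_or_lt with hXa | hXa
  · refine .inl (arrowDebreu_of_forall_ne_eq hnc (ωs := ωd) (b := b) fun ω hωd => ?_)
    rcases eq_or_ne ω ωa with rfl | hωa
    exacts [hXa, hb ω hωa hωd]
  rcases (hge ωd (Ne.symm had)).eq_or_lt with hXd | hXd
  · refine .inl (arrowDebreu_of_forall_ne_eq hnc (ωs := ωa) (b := b) fun ω hωa => ?_)
    rcases eq_or_ne ω ωd with rfl | hωd
    exacts [hXd.symm, hb ω hωa hωd]
  · exact .inr ⟨X ωa, b, X ωd, ωa, ωd, hXa, hXd, had, rfl, rfl, hb⟩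

def TwoAboveTwoBelow (X : Ω → ℝ) (v : ℝ) : Prop :=
  ∃ ω₁ ω₂ ω₃ ω₄, ω₁ ≠ ω₃ ∧ ω₂ ≠ ω₄ ∧ v < X ω₁ ∧ X ω₂ < v ∧ v < X ω₃ ∧ X ω₄ < v

/-- Let `ωd` maximise `X` and `b` be the largest value of `X` off `ωd`, attained at `ωb`. Then `X`
is at most `b` off `ωd`, so two states lie strictly below `b`, and `ωb`, `ωd` lie above them. -/
lemma exists_twoAboveTwoBelow_of_not_atMostOneAboveOneBelow [Fintype Ω] [Nonempty Ω]
    {X : Ω → ℝ} (hX : ¬ AtMostOneAboveOneBelow X) : ∃ v, TwoAboveTwoBelow X v := by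
  obtain ⟨ωd, -, hmax⟩ := Finset.exists_max_image Finset.univ X Finset.univ_nonempty
  obtain ⟨ω, hω⟩ : ∃ ω, ω ≠ ωd := by
    by_contra! h
    exact hX ⟨X ωd, ωd, ωd, fun ω hω => absurd (h ω) hω, fun ω hω => absurd (h ω) hω⟩
  obtain ⟨ωb, hωb, hbmax⟩ :=
    Finset.exists_max_image (Finset.univ.erase ωd) X ⟨ω, Finset.mem_erase.2 ⟨hω, mem_univ ω⟩⟩
  have hbd : ωb ≠ ωd := Finset.ne_of_mem_erase hωb
  have below : ∀ ωa, ∃ ω, ω ≠ ωa ∧ X ω < X ωb := by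
    by_contra! h
    obtain ⟨ωa, hωa⟩ := h
    exact hX ⟨X ωb, ωa, ωd, hωa, fun ω hω => hbmax ω (Finset.mem_erase.2 ⟨hω, mem_univ ω⟩)⟩
  obtain ⟨ω₂, -, h₂⟩ := below ωb
  obtain ⟨ω₄, h₄₂, h₄⟩ := below ω₂
  refine ⟨(max (X ω₂) (X ω₄) + X ωb) / 2, ωb, ω₂, ωd, ω₄, hbd, h₄₂.symm, ?_, ?_, ?_, ?_⟩ <;>
    linarith [le_max_left (X ω₂) (X ω₄), le_max_right (X ω₂) (X ω₄), max_lt h₂ h₄,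
      hmax ωb (mem_univ _)]

lemma isPartitionFun_fiber {β : Type*} (f : Ω → β) : IsPartitionFun fun ω => f ⁻¹' {f ω} :=
  ⟨fun _ => rfl, fun _ _ h => by rw [Set.mem_preimage, Set.mem_singleton_iff] at h; simp only [h]⟩

lemma not_separableSec_of_weightedExcess_eq_zero [Fintype Ω] {n : ℕ} {C : Fin n → Ω → Set Ω}
    (hmem : ∀ i ω, ω ∈ C i ω) {X w : Ω → ℝ} {v : ℝ} (hw : ∀ ω, 0 ≤ w ω)
    (hbal : ∀ i ω, 0 < w ω → weightedExcess w X v (C i ω) = 0) {ω₁ : Ω} (hw₁ : 0 < w ω₁)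
    (hX₁ : X ω₁ ≠ v) : ¬ SeparableSec C X := by
  have hc : 0 < ∑ ω, w ω :=
    Finset.sum_pos' (fun ω _ => hw ω) ⟨ω₁, Finset.mem_univ _, hw₁⟩
  refine not_not.2 ⟨fun ω => w ω / ∑ ω, w ω, v,
    ⟨fun ω => div_nonneg (hw ω) hc.le, by rw [← Finset.sum_div, div_self hc.ne']⟩,
    ⟨ω₁, div_pos hw₁ hc, hX₁⟩, fun i ω hω => ?_⟩
  have hwω : 0 < w ω := (div_pos_iff_of_pos_right hc).1 hω
  rw [condExp_eq_iff_weightedExcess_eq_zero_of_mem (fun ω => div_nonneg (hw ω) hc.le)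
    (hmem i ω) hω, weightedExcess_div_const, hbal i ω hwω, zero_div]

lemma TwoAboveTwoBelow.exists_not_separableSec [Fintype Ω] {X : Ω → ℝ} {v : ℝ}
    (h : TwoAboveTwoBelow X v) :
    ∃ C : Fin 2 → Ω → Set Ω, (∀ i, IsPartitionFun (C i)) ∧ FineJoin C ∧ ¬ SeparableSec C X := by
  obtain ⟨ω₁, ω₂, ω₃, ω₄, h₁₃, h₂₄, h₁, h₂, h₃, h₄⟩ := h
  have h₁₂ : ω₁ ≠ ω₂ := by rintro rfl; linarith
  have h₁₄ : ω₁ ≠ ω₄ := by rintro rfl; linarith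
  have h₃₂ : ω₃ ≠ ω₂ := by rintro rfl; linarith
  have h₃₄ : ω₃ ≠ ω₄ := by rintro rfl; linarith
  -- The cells of trader `i` are the fibres of `f i`: `{ω₁, ω₂}`, `{ω₃, ω₄}` for trader `0`,
  -- `{ω₂, ω₃}`, `{ω₄, ω₁}` for trader `1`, and singletons.
  let f : Fin 2 → Ω → Ω := ![fun ω => if ω = ω₂ then ω₁ else if ω = ω₄ then ω₃ else ω,
    fun ω => if ω = ω₂ then ω₃ else if ω = ω₄ then ω₁ else ω]
  let w : Ω → ℝ := Pi.single ω₁ (X ω₁ - v)⁻¹ + Pi.single ω₂ (v - X ω₂)⁻¹ +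
    Pi.single ω₃ (X ω₃ - v)⁻¹ + Pi.single ω₄ (v - X ω₄)⁻¹
  have hw : ∀ ω, 0 ≤ w ω := by
    refine Pi.le_def.1 (add_nonneg (add_nonneg (add_nonneg ?_ ?_) ?_) ?_) <;>
      exact Pi.single_nonneg.2 (inv_nonneg.2 (by linarith))
  have hw₁ : 0 < w ω₁ := by simpa [w, h₁₂, h₁₃, h₁₄] using h₁
  have hexcess : ∀ S, weightedExcess w X v S = (if ω₁ ∈ S then 1 else 0) -
      (if ω₂ ∈ S then 1 else 0) + (if ω₃ ∈ S then 1 else 0) - (if ω₄ ∈ S then 1 else 0) := by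
    intro S
    have e₁ : (X ω₁ - v)⁻¹ * (X ω₁ - v) = 1 := inv_mul_cancel₀ (by linarith)
    have e₂ : (v - X ω₂)⁻¹ * (X ω₂ - v) = -1 := by
      rw [← neg_sub, inv_neg, neg_mul, inv_mul_cancel₀ (by linarith)]
    have e₃ : (X ω₃ - v)⁻¹ * (X ω₃ - v) = 1 := inv_mul_cancel₀ (by linarith)
    have e₄ : (v - X ω₄)⁻¹ * (X ω₄ - v) = -1 := by
      rw [← neg_sub, inv_neg, neg_mul, inv_mul_cancel₀ (by linarith)]
    simp only [w, weightedExcess_add, weightedExcess_single, e₁, e₂, e₃, e₄]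
    split_ifs <;> ring
  refine ⟨fun i ω => f i ⁻¹' {f i ω}, fun i => isPartitionFun_fiber _, ?_,
    not_separableSec_of_weightedExcess_eq_zero (C := fun i ω => f i ⁻¹' {f i ω})
      (fun i ω => rfl) hw (fun i ω _ => ?_) hw₁ h₁.ne'⟩
  · intro ω ω' hω'
    have h0 := hω' 0
    have h1 := hω' 1
    simp only [f, Set.mem_preimage, Set.mem_singleton_iff, Matrix.cons_val_zero,
      Matrix.cons_val_one] at h0 h1
    grind
  · rw [hexcess]
    fin_cases i <;> simp [f, h₁₂, h₁₄, h₃₂, h₃₄, h₂₄.symm]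

end

theorem always_separable_iff_general {Ω : Type*} [Fintype Ω] (X : Ω → ℝ)
    (hnc : ¬ ∃ cst : ℝ, ∀ ω, X ω = cst) :
    (∀ (n : ℕ), 1 ≤ n → ∀ C : Fin n → Ω → Set Ω,
        (∀ i, IsPartitionFun (C i)) → FineJoin C → SeparableSec C X)
      ↔ (ArrowDebreu X ∨ ThreeValueForm X) := by
  constructor
  · intro hsep
    refine AtMostOneAboveOneBelow.arrowDebreu_or_threeValueForm (by_contra fun hX => ?_) hnc
    obtain ⟨ω, -⟩ := not_forall.1 (not_exists.1 hnc 0)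
    have : Nonempty Ω := ⟨ω⟩
    obtain ⟨v, hv⟩ := exists_twoAboveTwoBelow_of_not_atMostOneAboveOneBelow hX
    obtain ⟨C, hC, hFJ, hns⟩ := hv.exists_not_separableSec
    exact hns (hsep 2 one_le_two C hC hFJ)
  · intro hX n hn C hC hFJ
    exact (atMostOneAboveOneBelow_of_arrowDebreu_or_threeValueForm hX).separableSec hFJ
      (fun i => (hC i).1) ⟨0, hn⟩

/-- classification of always-separable non-constant securities. -/
theorem always_separable_iff {Ω : Type*} [Fintype Ω]
    (hcard : 3 ≤ Fintype.card Ω) (X : Ω → ℝ)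
    (hnc : ¬ ∃ cst : ℝ, ∀ ω, X ω = cst) :
    (∀ (n : ℕ), 1 ≤ n → ∀ C : Fin n → Ω → Set Ω,
        (∀ i, IsPartitionFun (C i)) → FineJoin C → SeparableSec C X)
      ↔ (ArrowDebreu X ∨ ThreeValueForm X) :=
  always_separable_iff_general X hnc
end
end

section
/- Let Ω be a finite state space and let X: Ω → ℝ be a security of three-value form, i.e., there exist reals a < b < d and distinct states ω_a, ω_d with X(ω_a) = a, X(ω_d) = d, and X(ω) = b for all other states ω. Then X is separable under every information structure Π = (Π_1, …, Π_n) of Ω with the fine-join property. -/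
noncomputable section
open scoped Classical
open Finset

lemma weight_pos_aux {Ω : Type*} [Fintype Ω] (μ : Ω → ℝ) (S : Set Ω)
    (hμ : ∀ ω, 0 ≤ μ ω) (ω0 : Ω) (h0 : ω0 ∈ S) (hpos : 0 < μ ω0) :
    0 < ∑ ω, if ω ∈ S then μ ω else 0 := by
  apply Finset.sum_pos'
  · intro ω _
    split
    · exact hμ ω
    · exact le_refl 0
  · exact ⟨ω0, Finset.mem_univ _, by simp [h0, hpos]⟩

lemma condExp_const_on {Ω : Type*} [Fintype Ω] (μ X : Ω → ℝ) (S : Set Ω) (b : ℝ)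
    (hμ : ∀ ω, 0 ≤ μ ω) (hb : ∀ ω ∈ S, 0 < μ ω → X ω = b)
    (ω0 : Ω) (h0 : ω0 ∈ S) (hpos : 0 < μ ω0) :
    condExp μ X S = b := by
  have hW : 0 < ∑ ω, if ω ∈ S then μ ω else 0 := weight_pos_aux μ S hμ ω0 h0 hpos
  have hN : (∑ ω, if ω ∈ S then μ ω * X ω else 0)
      = b * ∑ ω, if ω ∈ S then μ ω else 0 := by
    rw [Finset.mul_sum]
    refine Finset.sum_congr rfl fun ω _ => ?_
    split
    · rename_i hmem
      rcases (hμ ω).eq_or_lt with h | h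
      · rw [← h]; ring
      · rw [hb ω hmem h]; ring
    · ring
  rw [condExp, hN, mul_div_assoc, div_self hW.ne', mul_one]

lemma condExp_lt_of {Ω : Type*} [Fintype Ω] (μ X : Ω → ℝ) (S : Set Ω) (b : ℝ)
    (hμ : ∀ ω, 0 ≤ μ ω) (hb : ∀ ω ∈ S, 0 < μ ω → X ω ≤ b)
    (ω0 : Ω) (h0 : ω0 ∈ S) (hpos : 0 < μ ω0) (hlt : X ω0 < b) :
    condExp μ X S < b := by
  have hW : 0 < ∑ ω, if ω ∈ S then μ ω else 0 := weight_pos_aux μ S hμ ω0 h0 hpos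
  have hN : (∑ ω, if ω ∈ S then μ ω * X ω else 0)
      < b * ∑ ω, if ω ∈ S then μ ω else 0 := by
    rw [Finset.mul_sum]
    refine Finset.sum_lt_sum (fun ω _ => ?_) ⟨ω0, Finset.mem_univ _, ?_⟩
    · split
      · rename_i hmem
        rcases (hμ ω).eq_or_lt with h | h
        · rw [← h]; simp
        · nlinarith [hb ω hmem h]
      · simp
    · simp only [h0, if_pos]
      nlinarith
  unfold condExp
  rw [div_lt_iff₀ hW]
  linarith

lemma condExp_gt_of {Ω : Type*} [Fintype Ω] (μ X : Ω → ℝ) (S : Set Ω) (b : ℝ)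
    (hμ : ∀ ω, 0 ≤ μ ω) (hb : ∀ ω ∈ S, 0 < μ ω → b ≤ X ω)
    (ω0 : Ω) (h0 : ω0 ∈ S) (hpos : 0 < μ ω0) (hlt : b < X ω0) :
    b < condExp μ X S := by
  have h := condExp_lt_of μ (fun ω => -X ω) S (-b) hμ
    (fun ω hω hp => neg_le_neg (hb ω hω hp)) ω0 h0 hpos (neg_lt_neg hlt)
  have heq : condExp μ (fun ω => -X ω) S = - condExp μ X S := by
    unfold condExp
    rw [← neg_div]
    congr 1
    rw [← Finset.sum_neg_distrib]
    refine Finset.sum_congr rfl fun ω _ => ?_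
    split <;> ring
  rw [heq] at h
  linarith

/-- a security of three-value form is separable under every
information structure with the fine-join property. -/
theorem threeValueForm_separable {Ω : Type*} [Fintype Ω] (X : Ω → ℝ)
    (hTV : ThreeValueForm X) {n : ℕ} (C : Fin n → Ω → Set Ω)
    (hC : ∀ i, IsPartitionFun (C i)) (hFJ : FineJoin C) :
    SeparableSec C X := by
  obtain ⟨a, b, d, ωa, ωd, hab, hbd, hadne, hXa, hXd, hXb⟩ := hTV
  rintro ⟨μ, v, ⟨hμ0, hμ1⟩, ⟨ωw, hωw, hXw⟩, hcond⟩
  have hex : ∀ ω ω' : Ω, ω' ≠ ω → ∃ i, ω' ∉ C i ω := by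
    intro ω ω' hne'
    by_contra h
    push_neg at h
    exact hne' (hFJ ω ω' h)
  obtain ⟨i0, hi0⟩ := hex ωa ωd hadne.symm
  obtain ⟨j0, hj0⟩ := hex ωd ωa hadne
  have hmema : ∀ i ω, ω ∈ C i ω := fun i ω => (hC i).1 ω
  -- key computed values
  by_cases ha : ωa ∈ suppSet μ <;> by_cases hd : ωd ∈ suppSet μ
  · -- both in support : v < b and b < v
    have h1 : condExp μ X (C i0 ωa) < b := by
      refine condExp_lt_of μ X _ b hμ0 (fun ω hω _ => ?_) ωa (hmema i0 ωa) ha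
        (by rw [hXa]; exact hab)
      rcases eq_or_ne ω ωa with rfl | hwa
      · rw [hXa]; exact le_of_lt hab
      · rcases eq_or_ne ω ωd with rfl | hwd
        · exact absurd hω hi0
        · rw [hXb ω hwa hwd]
    have h2 : b < condExp μ X (C j0 ωd) := by
      refine condExp_gt_of μ X _ b hμ0 (fun ω hω _ => ?_) ωd (hmema j0 ωd) hd
        (by rw [hXd]; exact hbd)
      rcases eq_or_ne ω ωd with rfl | hwd
      · rw [hXd]; exact le_of_lt hbd
      · rcases eq_or_ne ω ωa with rfl | hwa
        · exact absurd hω hj0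
        · rw [hXb ω hwa hwd]; 
    rw [hcond i0 ωa ha] at h1
    rw [hcond j0 ωd hd] at h2
    linarith
  · -- ωa in support, ωd not
    have h1 : condExp μ X (C i0 ωa) < b := by
      refine condExp_lt_of μ X _ b hμ0 (fun ω _ hp => ?_) ωa (hmema i0 ωa) ha
        (by rw [hXa]; exact hab)
      rcases eq_or_ne ω ωa with rfl | hwa
      · rw [hXa]; exact le_of_lt hab
      · rcases eq_or_ne ω ωd with rfl | hwd
        · exact absurd hp hd
        · rw [hXb ω hwa hwd]
    rw [hcond i0 ωa ha] at h1
    by_cases hsup : ∃ ω0 ∈ suppSet μ, ω0 ≠ ωa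
    · obtain ⟨ω0, hω0, hω0a⟩ := hsup
      obtain ⟨k, hk⟩ := hex ω0 ωa hω0a.symm
      have h2 : condExp μ X (C k ω0) = b := by
        refine condExp_const_on μ X _ b hμ0 (fun ω hω hp => ?_) ω0 (hmema k ω0) hω0
        rcases eq_or_ne ω ωa with rfl | hwa
        · exact absurd hω hk
        · rcases eq_or_ne ω ωd with rfl | hwd
          · exact absurd hp hd
          · exact hXb ω hwa hwd
      rw [hcond k ω0 hω0] at h2
      linarith
    · push_neg at hsup
      have hwa : ωw = ωa := hsup ωw hωw
      have h3 : condExp μ X (C i0 ωa) = a := by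
        refine condExp_const_on μ X _ a hμ0 (fun ω _ hp => ?_) ωa (hmema i0 ωa) ha
        rw [hsup ω hp, hXa]
      rw [hcond i0 ωa ha] at h3
      exact hXw (by rw [hwa, hXa, ← h3])
  · -- ωd in support, ωa not
    have h1 : b < condExp μ X (C j0 ωd) := by
      refine condExp_gt_of μ X _ b hμ0 (fun ω _ hp => ?_) ωd (hmema j0 ωd) hd
        (by rw [hXd]; exact hbd)
      rcases eq_or_ne ω ωd with rfl | hwd
      · rw [hXd]; exact le_of_lt hbd
      · rcases eq_or_ne ω ωa with rfl | hwa
        · exact absurd hp ha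
        · rw [hXb ω hwa hwd]
    rw [hcond j0 ωd hd] at h1
    by_cases hsup : ∃ ω0 ∈ suppSet μ, ω0 ≠ ωd
    · obtain ⟨ω0, hω0, hω0d⟩ := hsup
      obtain ⟨k, hk⟩ := hex ω0 ωd hω0d.symm
      have h2 : condExp μ X (C k ω0) = b := by
        refine condExp_const_on μ X _ b hμ0 (fun ω hω hp => ?_) ω0 (hmema k ω0) hω0
        rcases eq_or_ne ω ωd with rfl | hwd
        · exact absurd hω hk
        · rcases eq_or_ne ω ωa with rfl | hwa
          · exact absurd hp ha
          · exact hXb ω hwa hwd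
      rw [hcond k ω0 hω0] at h2
      linarith
    · push_neg at hsup
      have hwd : ωw = ωd := hsup ωw hωw
      have h3 : condExp μ X (C j0 ωd) = d := by
        refine condExp_const_on μ X _ d hμ0 (fun ω _ hp => ?_) ωd (hmema j0 ωd) hd
        rw [hsup ω hp, hXd]
      rw [hcond j0 ωd hd] at h3
      exact hXw (by rw [hwd, hXd, ← h3])
  · -- neither in support : X = b on supp
    have hwa : ωw ≠ ωa := fun h => ha (h ▸ hωw)
    have hwd : ωw ≠ ωd := fun h => hd (h ▸ hωw)
    have h2 : condExp μ X (C i0 ωw) = b := by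
      refine condExp_const_on μ X _ b hμ0 (fun ω _ hp => ?_) ωw (hmema i0 ωw) hωw
      rcases eq_or_ne ω ωa with rfl | hwa'
      · exact absurd hp ha
      · rcases eq_or_ne ω ωd with rfl | hwd'
        · exact absurd hp hd
        · exact hXb ω hwa' hwd'
    rw [hcond i0 ωw hωw] at h2
    exact hXw (by rw [hXb ωw hwa hwd, h2])
end
end

section
/- (Ostrovsky's characterization of separability.) Let Ω be a finite state space, Π = (Π_1, …, Π_n) an information structure with the fine-join property, and X: Ω → ℝ a security. Then X is separable under Π if and only if for every v ∈ ℝ there exist functions λ_i: Π_i → ℝ (i = 1, …, n) such that for every state ω with X(ω) ≠ v one has (X(ω) − v) · ∑_{i=1}^n λ_i(Π_i(ω)) > 0. -/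
noncomputable section
open scoped Classical
open Finset

lemma aux_le_zero (a b : ℝ) (h : ∀ ε : ℝ, 0 < ε → a + ε * b < 0) : a ≤ 0 := by
  have hcont : Filter.Tendsto (fun ε : ℝ => a + ε * b) (nhdsWithin 0 (Set.Ioi 0))
      (nhds (a + 0 * b)) :=
    ((continuous_const.add (continuous_id.mul continuous_const)).tendsto 0).mono_left
      nhdsWithin_le_nhds
  have hev : ∀ᶠ ε in nhdsWithin (0:ℝ) (Set.Ioi 0), a + ε * b ≤ 0 :=
    Filter.eventually_of_mem self_mem_nhdsWithin (fun ε hε => (h ε hε).le)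
  have := le_of_tendsto hcont hev
  linarith


lemma pi_decomp {Ω : Type*} [Fintype Ω] (f : (Ω → ℝ) →L[ℝ] ℝ) (g : Ω → ℝ) :
    f g = ∑ ω, g ω * f (Pi.single ω 1) := by
  conv_lhs => rw [← Finset.univ_sum_single g]
  rw [map_sum]
  refine Finset.sum_congr rfl fun ω _ => ?_
  have : Pi.single ω (g ω) = g ω • (Pi.single ω (1:ℝ) : Ω → ℝ) := by
    funext ω'; by_cases h : ω' = ω <;> simp [Pi.single_apply, h]
  rw [this, map_smul, smul_eq_mul]


lemma cellsum_zero {Ω : Type*} [Fintype Ω] (μ X : Ω → ℝ) (v : ℝ) (S : Set Ω)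
    (hden : 0 < ∑ ω, if ω ∈ S then μ ω else 0) (hc : condExp μ X S = v) :
    ∑ ω, (if ω ∈ S then μ ω * (X ω - v) else 0) = 0 := by
  unfold condExp at hc
  rw [div_eq_iff (ne_of_gt hden)] at hc
  have : ∀ ω : Ω, (if ω ∈ S then μ ω * (X ω - v) else 0)
      = (if ω ∈ S then μ ω * X ω else 0) - v * (if ω ∈ S then μ ω else 0) := by
    intro ω; split <;> ring
  rw [Finset.sum_congr rfl (fun ω _ => this ω), Finset.sum_sub_distrib, ← Finset.mul_sum]
  linarith

/-- membership in another cell is a class invariant -/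
lemma mem_cell_congr {Ω : Type*} {C : Ω → Set Ω} (hC : IsPartitionFun C)
    {ω ω' ω₀ : Ω} (h : ω' ∈ C ω) : ω' ∈ C ω₀ ↔ ω ∈ C ω₀ := by
  have hcc : C ω' = C ω := hC.2 ω ω' h
  constructor
  · intro h1
    have : C ω' = C ω₀ := hC.2 ω₀ ω' h1
    rw [← this, hcc]; exact hC.1 ω
  · intro h1
    have : C ω = C ω₀ := hC.2 ω₀ ω h1
    rw [← this]; exact h

/-- The easy direction core: lambda weights contradict a non-separating prior. -/
lemma easy_dir {Ω : Type*} [Fintype Ω] {n : ℕ} (C : Fin n → Ω → Set Ω)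
    (hC : ∀ i, IsPartitionFun (C i)) (X μ : Ω → ℝ) (v : ℝ)
    (hμ0 : ∀ ω, 0 ≤ μ ω)
    (hcond : ∀ (i : Fin n) (ω : Ω), 0 < μ ω → condExp μ X (C i ω) = v)
    (lam : Fin n → Ω → ℝ)
    (hmeas : ∀ (i : Fin n) (ω ω' : Ω), ω' ∈ C i ω → lam i ω' = lam i ω)
    (hpos : ∀ ω : Ω, X ω ≠ v → (X ω - v) * ∑ i, lam i ω > 0)
    (ω₀ : Ω) (hω₀p : 0 < μ ω₀) (hω₀v : X ω₀ ≠ v) : False := by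
  set F : Ω → ℝ := fun ω => μ ω * ((X ω - v) * ∑ i, lam i ω) with hF
  have hK0 : ∑ ω, F ω = 0 := by
    have hsplit : ∀ ω : Ω, F ω = ∑ i, μ ω * ((X ω - v) * lam i ω) := by
      intro ω; rw [hF]; simp only
      rw [Finset.mul_sum, Finset.mul_sum]
    rw [Finset.sum_congr rfl (fun ω _ => hsplit ω), Finset.sum_comm]
    refine Finset.sum_eq_zero fun i _ => ?_
    -- fiberwise over cells of Π_i
    set g : Ω → Finset Ω := fun ω => univ.filter (· ∈ C i ω) with hg
    rw [← Finset.sum_fiberwise univ g (fun ω => μ ω * ((X ω - v) * lam i ω))]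
    refine Finset.sum_eq_zero fun b _ => ?_
    rcases Finset.eq_empty_or_nonempty (univ.filter (fun ω => g ω = b)) with he | ⟨ω₁, hω₁⟩
    · rw [he, Finset.sum_empty]
    · have hω₁b : g ω₁ = b := (Finset.mem_filter.1 hω₁).2
      have hfib : univ.filter (fun ω => g ω = b) = univ.filter (· ∈ C i ω₁) := by
        ext a
        simp only [Finset.mem_filter, Finset.mem_univ, true_and, ← hω₁b]
        constructor
        · intro h
          have ha : a ∈ g a := by rw [hg]; simp [(hC i).1 a]
          rw [h] at ha
          exact (Finset.mem_filter.1 ha).2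
        · intro h
          rw [hg]; simp only
          congr 1
          exact (hC i).2 ω₁ a h
      rw [hfib]
      have hlam : ∀ a ∈ univ.filter (· ∈ C i ω₁),
          μ a * ((X a - v) * lam i a) = lam i ω₁ * (μ a * (X a - v)) := by
        intro a ha
        rw [hmeas i ω₁ a (Finset.mem_filter.1 ha).2]; ring
      rw [Finset.sum_congr rfl hlam, ← Finset.mul_sum]
      rcases Classical.em (∃ a ∈ C i ω₁, 0 < μ a) with ⟨a₁, ha₁c, ha₁p⟩ | hno
      · have hcell : C i a₁ = C i ω₁ := (hC i).2 ω₁ a₁ ha₁c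
        have hden : 0 < ∑ ω, if ω ∈ C i ω₁ then μ ω else 0 := by
          refine Finset.sum_pos' (fun a _ => ?_) ⟨a₁, Finset.mem_univ a₁, ?_⟩
          · split <;> [exact hμ0 a; exact le_refl 0]
          · rw [if_pos ha₁c]; exact ha₁p
        have hc := hcond i a₁ ha₁p
        rw [hcell] at hc
        have := cellsum_zero μ X v (C i ω₁) hden hc
        rw [Finset.sum_filter]
        rw [this, mul_zero]
      · push_neg at hno
        rw [Finset.sum_eq_zero, mul_zero]
        intro a ha
        have : μ a = 0 := le_antisymm (hno a (Finset.mem_filter.1 ha).2) (hμ0 a)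
        rw [this, zero_mul]
  have hKpos : 0 < ∑ ω, F ω := by
    refine Finset.sum_pos' (fun ω _ => ?_) ⟨ω₀, Finset.mem_univ ω₀, ?_⟩
    · rcases Classical.em (X ω = v) with h | h
      · simp [hF, h]
      · exact mul_nonneg (hμ0 ω) (hpos ω h).le
    · exact mul_pos hω₀p (hpos ω₀ hω₀v)
  rw [hK0] at hKpos; exact lt_irrefl 0 hKpos

lemma hard_dir {Ω : Type*} [Fintype Ω] {n : ℕ} (C : Fin n → Ω → Set Ω)
    (hC : ∀ i, IsPartitionFun (C i)) (X : Ω → ℝ) (v : ℝ)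
    (hno : ¬ ∃ lam : Fin n → Ω → ℝ,
        (∀ (i : Fin n) (ω ω' : Ω), ω' ∈ C i ω → lam i ω' = lam i ω) ∧
        ∀ ω : Ω, X ω ≠ v → (X ω - v) * ∑ i, lam i ω > 0) :
    ∃ μ : Ω → ℝ, IsPrior μ ∧ NonSeparableAt C X μ v := by
  have hS : ∃ ω : Ω, X ω ≠ v := by
    by_contra h
    push_neg at h
    exact hno ⟨fun _ _ => 0, fun _ _ _ _ => rfl, fun ω hω => absurd (h ω) hω⟩
  set O : Set (Ω → ℝ) := {g | ∀ ω, X ω ≠ v → 0 < g ω} with hOdef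
  set T : Set (Ω → ℝ) := {g | ∃ lam : Fin n → Ω → ℝ,
      (∀ (i : Fin n) (ω ω' : Ω), ω' ∈ C i ω → lam i ω' = lam i ω) ∧
      ∀ ω, g ω = (X ω - v) * ∑ i, lam i ω} with hTdef
  have hOopen : IsOpen O := by
    have hrw : O = ⋂ ω, {g : Ω → ℝ | X ω ≠ v → 0 < g ω} := by
      ext g; simp only [hOdef, Set.mem_setOf_eq, Set.mem_iInter]
    rw [hrw]
    refine isOpen_iInter_of_finite fun ω => ?_
    rcases Classical.em (X ω = v) with h | h
    · have : {g : Ω → ℝ | X ω ≠ v → 0 < g ω} = Set.univ := by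
        ext g; simp [h]
      rw [this]; exact isOpen_univ
    · have : {g : Ω → ℝ | X ω ≠ v → 0 < g ω} = (fun g : Ω → ℝ => g ω) ⁻¹' Set.Ioi 0 := by
        ext g; simp [h]
      rw [this]; exact (isOpen_Ioi).preimage (continuous_apply ω)
  have hOconv : Convex ℝ O := by
    intro x hx y hy a b ha hb hab
    intro ω hω
    have hx' := hx ω hω
    have hy' := hy ω hω
    simp only [Pi.add_apply, Pi.smul_apply, smul_eq_mul]
    rcases ha.eq_or_lt with h0 | hapos
    · rw [← h0] at hab ⊢
      rw [zero_add] at hab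
      rw [hab]; simpa using hy'
    · exact add_pos_of_pos_of_nonneg (mul_pos hapos hx') (mul_nonneg hb hy'.le)
  have hTconv : Convex ℝ T := by
    rintro x ⟨lx, hlxm, hlx⟩ y ⟨ly, hlym, hly⟩ a b ha hb hab
    refine ⟨fun i ω => a * lx i ω + b * ly i ω, ?_, ?_⟩
    · intro i ω ω' h
      dsimp only
      rw [hlxm i ω ω' h, hlym i ω ω' h]
    · intro ω
      have hsum : ∑ i, (a * lx i ω + b * ly i ω)
          = a * ∑ i, lx i ω + b * ∑ i, ly i ω := by
        rw [Finset.sum_add_distrib, Finset.mul_sum, Finset.mul_sum]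
      simp only [Pi.add_apply, Pi.smul_apply, smul_eq_mul, hlx ω, hly ω, hsum]
      ring
  have hdisj : Disjoint O T := by
    rw [Set.disjoint_left]
    rintro g hgO ⟨lam, hm, he⟩
    exact hno ⟨lam, hm, fun ω hω => by rw [← he ω]; exact hgO ω hω⟩
  obtain ⟨f, u, hfO, hfT⟩ := geometric_hahn_banach_open hOconv hOopen hTconv hdisj
  have hsmulT : ∀ (c : ℝ) (g : Ω → ℝ), g ∈ T → c • g ∈ T := by
    rintro c g ⟨lam, hm, he⟩
    refine ⟨fun i ω => c * lam i ω, fun i ω ω' h => by dsimp only; rw [hm i ω ω' h], fun ω => ?_⟩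
    have h1 : ∑ i, c * lam i ω = c * ∑ i, lam i ω := (Finset.mul_sum _ _ _).symm
    simp only [Pi.smul_apply, smul_eq_mul, he ω, h1]
    ring
  have hT0 : ∀ g ∈ T, f g = 0 := by
    intro g hg
    by_contra hne
    have h1 := hfT _ (hsmulT ((u - 1) / f g) g hg)
    rw [map_smul, smul_eq_mul, div_mul_cancel₀ _ hne] at h1
    linarith
  have hu0 : u ≤ 0 := by
    have h0T : (0 : Ω → ℝ) ∈ T :=
      ⟨fun _ _ => 0, fun _ _ _ _ => rfl, fun ω => by simp⟩
    have := hfT 0 h0T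
    rwa [map_zero] at this
  set χ : Ω → ℝ := fun ω => if X ω ≠ v then (1:ℝ) else 0 with hχdef
  have hχO : χ ∈ O := by
    intro ω hω
    simp [hχdef, hω]
  have hχ : f χ < 0 := lt_of_lt_of_le (hfO χ hχO) hu0
  set p : Ω → ℝ := fun ω => -f (Pi.single ω 1) with hpdef
  have hpnn : ∀ ω, X ω ≠ v → 0 ≤ p ω := by
    intro ω hω
    have hle : f (Pi.single ω 1) ≤ 0 := by
      apply aux_le_zero _ (f χ)
      intro ε hε
      have hmem : (Pi.single ω (1:ℝ) : Ω → ℝ) + ε • χ ∈ O := by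
        intro ω' hω'
        have h1 : (0:ℝ) ≤ (Pi.single ω (1:ℝ) : Ω → ℝ) ω' := by
          rw [Pi.single_apply]; split <;> norm_num
        have h2 : χ ω' = 1 := by simp [hχdef, hω']
        simp only [Pi.add_apply, Pi.smul_apply, smul_eq_mul, h2, mul_one]
        linarith
      have := hfO _ hmem
      rw [map_add, map_smul, smul_eq_mul] at this
      linarith
    simp only [hpdef]
    linarith
  have hpz : ∀ ω, X ω = v → p ω = 0 := by
    intro ω hω
    by_contra hne
    have hfne : f (Pi.single ω 1) ≠ 0 := by
      intro h
      exact hne (by simp [hpdef, h])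
    have hmem : χ + ((1 - f χ) / f (Pi.single ω 1)) • (Pi.single ω (1:ℝ) : Ω → ℝ) ∈ O := by
      intro ω' hω'
      have hne' : ω' ≠ ω := fun h => hω' (h ▸ hω)
      have h2 : χ ω' = 1 := by simp [hχdef, hω']
      simp only [Pi.add_apply, Pi.smul_apply, smul_eq_mul, h2, Pi.single_apply,
        if_neg hne', mul_zero, add_zero]
      norm_num
    have := hfO _ hmem
    rw [map_add, map_smul, smul_eq_mul, div_mul_cancel₀ _ hfne] at this
    linarith
  have hrep : ∀ g : Ω → ℝ, ∑ ω, p ω * g ω = -f g := by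
    intro g
    rw [pi_decomp f g, ← Finset.sum_neg_distrib]
    refine Finset.sum_congr rfl fun ω _ => ?_
    simp only [hpdef]
    ring
  set M : ℝ := ∑ ω, p ω with hMdef
  have hMχ : ∑ ω, p ω * χ ω = -f χ := hrep χ
  have hM : M = -f χ := by
    rw [← hMχ, hMdef]
    refine Finset.sum_congr rfl fun ω _ => ?_
    rcases Classical.em (X ω = v) with h | h
    · simp [hpz ω h]
    · have : χ ω = 1 := by simp [hχdef, h]
      rw [this, mul_one]
  have hMpos : 0 < M := by rw [hM]; linarith
  have hpnn' : ∀ ω, 0 ≤ p ω := by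
    intro ω
    rcases Classical.em (X ω = v) with h | h
    · rw [hpz ω h]
    · exact hpnn ω h
  set μ : Ω → ℝ := fun ω => p ω / M with hμdef
  have hμnn : ∀ ω, 0 ≤ μ ω := fun ω => div_nonneg (hpnn' ω) hMpos.le
  have hμsum : ∑ ω, μ ω = 1 := by
    simp only [hμdef]
    rw [← Finset.sum_div, ← hMdef, div_self (ne_of_gt hMpos)]
  have orth : ∀ (i : Fin n) (ω₀ : Ω),
      ∑ ω, (if ω ∈ C i ω₀ then p ω * (X ω - v) else 0) = 0 := by
    intro i ω₀
    set lam : Fin n → Ω → ℝ :=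
      fun j ω => if j = i then (if ω ∈ C i ω₀ then 1 else 0) else 0 with hlamdef
    have hm : ∀ (j : Fin n) (ω ω' : Ω), ω' ∈ C j ω → lam j ω' = lam j ω := by
      intro j ω ω' h
      simp only [hlamdef]
      rcases Classical.em (j = i) with rfl | hj
      · have hiff : (ω' ∈ C j ω₀) ↔ (ω ∈ C j ω₀) := mem_cell_congr (hC j) h
        simp [hiff]
      · simp [hj]
    set g : Ω → ℝ := fun ω => (X ω - v) * (if ω ∈ C i ω₀ then 1 else 0) with hgdef
    have hgT : g ∈ T := by
      refine ⟨lam, hm, fun ω => ?_⟩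
      simp only [hgdef, hlamdef]
      congr 1
      simp [Finset.sum_ite_eq']
    have h0 := hT0 g hgT
    have h2 : ∑ ω, p ω * g ω = 0 := by rw [hrep g, h0, neg_zero]
    have h3 : ∑ ω, (if ω ∈ C i ω₀ then p ω * (X ω - v) else 0) = ∑ ω, p ω * g ω := by
      refine Finset.sum_congr rfl fun ω _ => ?_
      by_cases h : ω ∈ C i ω₀ <;> simp [hgdef, h]
    rw [h3, h2]
  have hexist : ∃ ω, 0 < μ ω := by
    by_contra h
    push_neg at h
    have : ∑ ω, μ ω ≤ 0 := Finset.sum_nonpos fun ω _ => h ω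
    rw [hμsum] at this
    linarith
  obtain ⟨ω₁, hω₁⟩ := hexist
  have hsupp_ne : ∀ ω, 0 < μ ω → X ω ≠ v := by
    intro ω hω hXv
    rw [hμdef] at hω
    simp only at hω
    rw [hpz ω hXv, zero_div] at hω
    exact lt_irrefl 0 hω
  refine ⟨μ, ⟨hμnn, hμsum⟩, ⟨⟨ω₁, hω₁, hsupp_ne ω₁ hω₁⟩, ?_⟩⟩
  intro i ω hω
  have hωp : 0 < μ ω := hω
  have hden : 0 < ∑ ω', if ω' ∈ C i ω then μ ω' else 0 := by
    refine Finset.sum_pos' (fun a _ => ?_) ⟨ω, Finset.mem_univ ω, ?_⟩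
    · split <;> [exact hμnn a; exact le_refl 0]
    · rw [if_pos ((hC i).1 ω)]; exact hωp
  have hz : ∑ ω', (if ω' ∈ C i ω then μ ω' * (X ω' - v) else 0) = 0 := by
    have hdiv : ∑ ω', (if ω' ∈ C i ω then μ ω' * (X ω' - v) else 0)
        = (∑ ω', if ω' ∈ C i ω then p ω' * (X ω' - v) else 0) / M := by
      rw [Finset.sum_div]
      refine Finset.sum_congr rfl fun ω' _ => ?_
      split
      · simp only [hμdef]
        ring
      · rw [zero_div]
    rw [hdiv, orth i ω, zero_div]
  have hsplit : ∑ ω', (if ω' ∈ C i ω then μ ω' * (X ω' - v) else 0)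
      = (∑ ω', if ω' ∈ C i ω then μ ω' * X ω' else 0)
        - v * (∑ ω', if ω' ∈ C i ω then μ ω' else 0) := by
    have : ∀ ω' : Ω, (if ω' ∈ C i ω then μ ω' * (X ω' - v) else 0)
        = (if ω' ∈ C i ω then μ ω' * X ω' else 0)
          - v * (if ω' ∈ C i ω then μ ω' else 0) := by
      intro ω'; split <;> ring
    rw [Finset.sum_congr rfl (fun ω' _ => this ω'), Finset.sum_sub_distrib, ← Finset.mul_sum]
  unfold condExp
  rw [div_eq_iff (ne_of_gt hden)]
  rw [hsplit] at hz
  linarith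


/-- Ostrovsky's characterization: `X` is separable iff for every `v`
there are cell-measurable weights whose sum agrees in sign with `X(ω) - v`. -/
theorem separable_iff_exists_lambda {Ω : Type*} [Fintype Ω]
    {n : ℕ} (C : Fin n → Ω → Set Ω)
    (hC : ∀ i, IsPartitionFun (C i)) (hFJ : FineJoin C)
    (X : Ω → ℝ) :
    SeparableSec C X ↔
      ∀ v : ℝ, ∃ lam : Fin n → Ω → ℝ,
        (∀ (i : Fin n) (ω ω' : Ω), ω' ∈ C i ω → lam i ω' = lam i ω) ∧
        ∀ ω : Ω, X ω ≠ v → (X ω - v) * ∑ i, lam i ω > 0 := by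
  constructor
  · intro hsep v
    by_contra hno
    obtain ⟨μ, hp, hns⟩ := hard_dir C hC X v hno
    exact hsep ⟨μ, v, hp, hns⟩
  · rintro hlam ⟨μ, v, ⟨hμ0, hμ1⟩, ⟨ω₀, hω₀s, hω₀v⟩, hcond⟩
    obtain ⟨lam, hmeas, hpos⟩ := hlam v
    exact easy_dir C hC X μ v hμ0 (fun i ω h => hcond i ω h) lam hmeas hpos ω₀ hω₀s hω₀v
end
end

section
/- Let Ω be a finite state space and X: Ω → ℝ a security. Suppose there exist four distinct states ω_a, ω_b, ω_c, ω_d with X(ω_a) = a, X(ω_b) = b, X(ω_c) = c, X(ω_d) = d and a ≤ b < c ≤ d. Then there exist a two-trader information structure Π = (Π_1, Π_2) of Ω with the fine-join property, a prior μ with supp μ = {ω_a, ω_b, ω_c, ω_d}, and a value v ∈ ℝ such that X is non-separable at μ under Π with value v. -/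
noncomputable section
open scoped Classical
open Finset

/-! ### Auxiliary machinery -/

lemma sum_pair_ite {Ω : Type*} [Fintype Ω] (f : Ω → ℝ) {x y : Ω} (hxy : x ≠ y) :
    ∑ ω, (if ω = x ∨ ω = y then f ω else 0) = f x + f y := by
  have h : ∀ ω, (if ω = x ∨ ω = y then f ω else 0)
      = (if ω = x then f ω else 0) + (if ω = y then f ω else 0) := by
    intro ω
    by_cases h1 : ω = x <;> by_cases h2 : ω = y <;> simp [h1, h2] <;> aesop
  rw [Finset.sum_congr rfl fun ω _ => h ω, Finset.sum_add_distrib]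
  simp

lemma condExp_pair' {Ω : Type*} [Fintype Ω] (μ X : Ω → ℝ) {x y : Ω} (hxy : x ≠ y) :
    condExp μ X {x, y} = (μ x * X x + μ y * X y) / (μ x + μ y) := by
  unfold condExp
  simp only [Set.mem_insert_iff, Set.mem_singleton_iff]
  rw [sum_pair_ite (fun ω => μ ω * X ω) hxy, sum_pair_ite μ hxy]

lemma pair_value' (p q va vb v : ℝ) (hp : 0 < p) (hq : 0 < q)
    (h : p * (v - va) = q * (vb - v)) : (p * va + q * vb) / (p + q) = v := by
  have hpq : p + q ≠ 0 := by positivity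
  rw [div_eq_iff hpq]; nlinarith

/-- The representative map defining the two partitions: trader `0` pairs
`{ωa, ωd}` and `{ωb, ωc}`, trader `1` pairs `{ωa, ωc}` and `{ωb, ωd}`. -/
def rmap {Ω : Type*} (ωa ωb ωc ωd : Ω) : Fin 2 → Ω → Ω :=
  fun i ω => if i = 0 then (if ω = ωd then ωa else if ω = ωc then ωb else ω)
             else (if ω = ωc then ωa else if ω = ωd then ωb else ω)

def cellMap {Ω : Type*} (ωa ωb ωc ωd : Ω) : Fin 2 → Ω → Set Ω :=
  fun i ω => {ω' | rmap ωa ωb ωc ωd i ω' = rmap ωa ωb ωc ωd i ω}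

lemma cellMap_partition {Ω : Type*} (ωa ωb ωc ωd : Ω) (i : Fin 2) :
    IsPartitionFun (cellMap ωa ωb ωc ωd i) := by
  constructor
  · intro ω; simp [cellMap]
  · intro ω ω' h
    simp only [cellMap, Set.mem_setOf_eq] at h
    ext t; simp [cellMap, h]

section Cells
variable {Ω : Type*} {ωa ωb ωc ωd : Ω}


lemma cell0a (hab : ωa ≠ ωb) (hac : ωa ≠ ωc) (had : ωa ≠ ωd)
    (hbc : ωb ≠ ωc) (hbd : ωb ≠ ωd) (hcd : ωc ≠ ωd) :
    cellMap ωa ωb ωc ωd 0 ωa = {ωa, ωd} := by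
  ext t
  simp only [cellMap, rmap, Set.mem_setOf_eq, Set.mem_insert_iff, Set.mem_singleton_iff,
    if_pos rfl]
  norm_num
  split_ifs <;> simp_all <;> tauto

lemma cell0b (hab : ωa ≠ ωb) (hac : ωa ≠ ωc) (had : ωa ≠ ωd)
    (hbc : ωb ≠ ωc) (hbd : ωb ≠ ωd) (hcd : ωc ≠ ωd) :
    cellMap ωa ωb ωc ωd 0 ωb = {ωb, ωc} := by
  ext t
  simp only [cellMap, rmap, Set.mem_setOf_eq, Set.mem_insert_iff, Set.mem_singleton_iff,
    if_pos rfl]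
  norm_num
  split_ifs <;> simp_all <;> tauto

lemma cell0c (hab : ωa ≠ ωb) (hac : ωa ≠ ωc) (had : ωa ≠ ωd)
    (hbc : ωb ≠ ωc) (hbd : ωb ≠ ωd) (hcd : ωc ≠ ωd) :
    cellMap ωa ωb ωc ωd 0 ωc = {ωb, ωc} := by
  ext t
  simp only [cellMap, rmap, Set.mem_setOf_eq, Set.mem_insert_iff, Set.mem_singleton_iff,
    if_pos rfl]
  norm_num
  split_ifs <;> simp_all <;> tauto

lemma cell0d (hab : ωa ≠ ωb) (hac : ωa ≠ ωc) (had : ωa ≠ ωd)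
    (hbc : ωb ≠ ωc) (hbd : ωb ≠ ωd) (hcd : ωc ≠ ωd) :
    cellMap ωa ωb ωc ωd 0 ωd = {ωa, ωd} := by
  ext t
  simp only [cellMap, rmap, Set.mem_setOf_eq, Set.mem_insert_iff, Set.mem_singleton_iff,
    if_pos rfl]
  norm_num
  split_ifs <;> simp_all <;> tauto

lemma cell1a (hab : ωa ≠ ωb) (hac : ωa ≠ ωc) (had : ωa ≠ ωd)
    (hbc : ωb ≠ ωc) (hbd : ωb ≠ ωd) (hcd : ωc ≠ ωd) :
    cellMap ωa ωb ωc ωd 1 ωa = {ωa, ωc} := by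
  ext t
  simp only [cellMap, rmap, Set.mem_setOf_eq, Set.mem_insert_iff, Set.mem_singleton_iff]
  norm_num
  split_ifs <;> simp_all <;> tauto

lemma cell1b (hab : ωa ≠ ωb) (hac : ωa ≠ ωc) (had : ωa ≠ ωd)
    (hbc : ωb ≠ ωc) (hbd : ωb ≠ ωd) (hcd : ωc ≠ ωd) :
    cellMap ωa ωb ωc ωd 1 ωb = {ωb, ωd} := by
  ext t
  simp only [cellMap, rmap, Set.mem_setOf_eq, Set.mem_insert_iff, Set.mem_singleton_iff]
  norm_num
  split_ifs <;> simp_all <;> tauto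

lemma cell1c (hab : ωa ≠ ωb) (hac : ωa ≠ ωc) (had : ωa ≠ ωd)
    (hbc : ωb ≠ ωc) (hbd : ωb ≠ ωd) (hcd : ωc ≠ ωd) :
    cellMap ωa ωb ωc ωd 1 ωc = {ωa, ωc} := by
  ext t
  simp only [cellMap, rmap, Set.mem_setOf_eq, Set.mem_insert_iff, Set.mem_singleton_iff]
  norm_num
  split_ifs <;> simp_all <;> tauto

lemma cell1d (hab : ωa ≠ ωb) (hac : ωa ≠ ωc) (had : ωa ≠ ωd)
    (hbc : ωb ≠ ωc) (hbd : ωb ≠ ωd) (hcd : ωc ≠ ωd) :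
    cellMap ωa ωb ωc ωd 1 ωd = {ωb, ωd} := by
  ext t
  simp only [cellMap, rmap, Set.mem_setOf_eq, Set.mem_insert_iff, Set.mem_singleton_iff]
  norm_num
  split_ifs <;> simp_all <;> tauto

lemma cellMap_fineJoin (hab : ωa ≠ ωb) (hac : ωa ≠ ωc) (had : ωa ≠ ωd)
    (hbc : ωb ≠ ωc) (hbd : ωb ≠ ωd) (hcd : ωc ≠ ωd) :
    FineJoin (cellMap ωa ωb ωc ωd) := by
  intro ω ω' h
  have h0 := h 0
  have h1' := h 1
  simp only [cellMap, rmap, Set.mem_setOf_eq] at h0 h1'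
  norm_num at h0 h1'
  split_ifs at h0 h1' <;> subst_vars <;> first | rfl | tauto

end Cells

/-- if `X` takes values `a ≤ b < c ≤ d` at four distinct states,
then `X` is non-separable for some two-trader fine-join information structure,
some prior supported exactly on these four states, and some value `v`. -/
theorem nonseparable_of_four_values {Ω : Type*} [Fintype Ω] (X : Ω → ℝ)
    (ωa ωb ωc ωd : Ω)
    (hab : ωa ≠ ωb) (hac : ωa ≠ ωc) (had : ωa ≠ ωd)
    (hbc : ωb ≠ ωc) (hbd : ωb ≠ ωd) (hcd : ωc ≠ ωd)
    (a b c d : ℝ)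
    (hXa : X ωa = a) (hXb : X ωb = b) (hXc : X ωc = c) (hXd : X ωd = d)
    (h1 : a ≤ b) (h2 : b < c) (h3 : c ≤ d) :
    ∃ (C : Fin 2 → Ω → Set Ω) (μ : Ω → ℝ) (v : ℝ),
      (∀ i, IsPartitionFun (C i)) ∧ FineJoin C ∧ IsPrior μ ∧
      suppSet μ = {ωa, ωb, ωc, ωd} ∧ NonSeparableAt C X μ v := by
  -- the value
  set v : ℝ := (b + c) / 2 with hv
  have hbv : b < v := by rw [hv]; linarith
  have hvc : v < c := by rw [hv]; linarith
  have hav : a < v := lt_of_le_of_lt h1 hbv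
  have hvd : v < d := lt_of_lt_of_le hvc h3
  have hvane : v - a ≠ 0 := sub_ne_zero.mpr hav.ne'
  have hvbne : v - b ≠ 0 := sub_ne_zero.mpr hbv.ne'
  have hcvne : c - v ≠ 0 := sub_ne_zero.mpr hvc.ne'
  have hdvne : d - v ≠ 0 := sub_ne_zero.mpr hvd.ne'
  -- unnormalized weights
  set qa : ℝ := 1 / (v - a) with hqadef
  set qb : ℝ := 1 / (v - b) with hqbdef
  set qc : ℝ := 1 / (c - v) with hqcdef
  set qd : ℝ := 1 / (d - v) with hqddef
  have hqa : 0 < qa := by rw [hqadef]; exact one_div_pos.mpr (by linarith)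
  have hqb : 0 < qb := by rw [hqbdef]; exact one_div_pos.mpr (by linarith)
  have hqc : 0 < qc := by rw [hqcdef]; exact one_div_pos.mpr (by linarith)
  have hqd : 0 < qd := by rw [hqddef]; exact one_div_pos.mpr (by linarith)
  set q : Ω → ℝ := fun ω =>
    if ω = ωa then qa else if ω = ωb then qb else if ω = ωc then qc
    else if ω = ωd then qd else 0 with hq
  have hq_nonneg : ∀ ω, 0 ≤ q ω := by
    intro ω; rw [hq]; dsimp only
    split_ifs <;> first | exact le_of_lt (by assumption) | exact le_rfl
  have hqa' : q ωa = qa := by simp [hq]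
  have hqb' : q ωb = qb := by simp [hq, hab.symm]
  have hqc' : q ωc = qc := by simp [hq, hac.symm, hbc.symm]
  have hqd' : q ωd = qd := by simp [hq, had.symm, hbd.symm, hcd.symm]
  set Z : ℝ := ∑ ω, q ω with hZdef
  have hZ : 0 < Z := by
    rw [hZdef]
    exact Finset.sum_pos' (fun ω _ => hq_nonneg ω)
      ⟨ωa, Finset.mem_univ _, by rw [hqa']; exact hqa⟩
  have hZne : Z ≠ 0 := ne_of_gt hZ
  set μ : Ω → ℝ := fun ω => q ω / Z with hμ
  -- support facts
  have hsupp : suppSet μ = {ωa, ωb, ωc, ωd} := by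
    ext ω
    simp only [suppSet, Set.mem_setOf_eq, hμ, Set.mem_insert_iff, Set.mem_singleton_iff]
    rw [div_pos_iff]
    constructor
    · rintro (⟨h, -⟩ | ⟨-, h⟩)
      · rw [hq] at h; dsimp only at h
        split_ifs at h with e1 e2 e3 e4 <;> first | tauto | exact absurd h (lt_irrefl 0)
      · linarith
    · rintro (rfl | rfl | rfl | rfl)
      · exact Or.inl ⟨by rw [hqa']; exact hqa, hZ⟩
      · exact Or.inl ⟨by rw [hqb']; exact hqb, hZ⟩
      · exact Or.inl ⟨by rw [hqc']; exact hqc, hZ⟩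
      · exact Or.inl ⟨by rw [hqd']; exact hqd, hZ⟩
  -- μ values and balances
  have hμa : μ ωa = qa / Z := by rw [hμ]; dsimp only; rw [hqa']
  have hμb : μ ωb = qb / Z := by rw [hμ]; dsimp only; rw [hqb']
  have hμc : μ ωc = qc / Z := by rw [hμ]; dsimp only; rw [hqc']
  have hμd : μ ωd = qd / Z := by rw [hμ]; dsimp only; rw [hqd']
  have hμapos : 0 < μ ωa := by rw [hμa]; exact div_pos hqa hZ
  have hμbpos : 0 < μ ωb := by rw [hμb]; exact div_pos hqb hZ
  have hμcpos : 0 < μ ωc := by rw [hμc]; exact div_pos hqc hZ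
  have hμdpos : 0 < μ ωd := by rw [hμd]; exact div_pos hqd hZ
  have hbalA : μ ωa * (v - a) = 1 / Z := by
    rw [hμa, hqadef]; field_simp
  have hbalB : μ ωb * (v - b) = 1 / Z := by
    rw [hμb, hqbdef]; field_simp
  have hbalC : μ ωc * (c - v) = 1 / Z := by
    rw [hμc, hqcdef]; field_simp
  have hbalD : μ ωd * (d - v) = 1 / Z := by
    rw [hμd, hqddef]; field_simp
  -- the four conditional expectations
  have hEad : condExp μ X {ωa, ωd} = v := by
    rw [condExp_pair' μ X had, hXa, hXd]
    exact pair_value' _ _ _ _ _ hμapos hμdpos (by rw [hbalA, hbalD])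
  have hEbc : condExp μ X {ωb, ωc} = v := by
    rw [condExp_pair' μ X hbc, hXb, hXc]
    exact pair_value' _ _ _ _ _ hμbpos hμcpos (by rw [hbalB, hbalC])
  have hEac : condExp μ X {ωa, ωc} = v := by
    rw [condExp_pair' μ X hac, hXa, hXc]
    exact pair_value' _ _ _ _ _ hμapos hμcpos (by rw [hbalA, hbalC])
  have hEbd : condExp μ X {ωb, ωd} = v := by
    rw [condExp_pair' μ X hbd, hXb, hXd]
    exact pair_value' _ _ _ _ _ hμbpos hμdpos (by rw [hbalB, hbalD])
  refine ⟨cellMap ωa ωb ωc ωd, μ, v, fun i => cellMap_partition _ _ _ _ i,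
    cellMap_fineJoin hab hac had hbc hbd hcd, ?_, hsupp, ?_, ?_⟩
  · -- prior
    refine ⟨fun ω => by rw [hμ]; dsimp only; exact div_nonneg (hq_nonneg ω) hZ.le, ?_⟩
    rw [hμ]
    rw [← Finset.sum_div, ← hZdef, div_self hZne]
  · -- witness of nonconstancy
    refine ⟨ωb, ?_, ?_⟩
    · rw [hsupp]; simp
    · rw [hXb]; exact ne_of_lt hbv
  · -- conditional expectations equal v
    intro i ω hω
    rw [hsupp] at hω
    simp only [Set.mem_insert_iff, Set.mem_singleton_iff] at hω
    fin_cases i <;> rcases hω with rfl | rfl | rfl | rfl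
    · rw [show ((⟨0, by norm_num⟩ : Fin 2)) = 0 from rfl, cell0a hab hac had hbc hbd hcd]
      exact hEad
    · rw [show ((⟨0, by norm_num⟩ : Fin 2)) = 0 from rfl, cell0b hab hac had hbc hbd hcd]
      exact hEbc
    · rw [show ((⟨0, by norm_num⟩ : Fin 2)) = 0 from rfl, cell0c hab hac had hbc hbd hcd]
      exact hEbc
    · rw [show ((⟨0, by norm_num⟩ : Fin 2)) = 0 from rfl, cell0d hab hac had hbc hbd hcd]
      exact hEad
    · rw [show ((⟨1, by norm_num⟩ : Fin 2)) = 1 from rfl, cell1a hab hac had hbc hbd hcd]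
      exact hEac
    · rw [show ((⟨1, by norm_num⟩ : Fin 2)) = 1 from rfl, cell1b hab hac had hbc hbd hcd]
      exact hEbd
    · rw [show ((⟨1, by norm_num⟩ : Fin 2)) = 1 from rfl, cell1c hab hac had hbc hbd hcd]
      exact hEac
    · rw [show ((⟨1, by norm_num⟩ : Fin 2)) = 1 from rfl, cell1d hab hac had hbc hbd hcd]
      exact hEbd
end
end

section
/- Let a, b, d ∈ ℝ satisfy (d − a)(d − b) > 0 (i.e., either both a < d and b < d, or both a > d and b > d). Then for every m ∈ (0, 1/2) there exists p ∈ (0, 1 − 2m) such that a·p/(p + m) + d·m/(p + m) = b·(1 − p − 2m)/(1 − p − m) + d·m/(1 − p − m). -/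
/-!
Both sides are weighted averages with `d`: the left one of `a` and `d` with weights `p, m`, the right
one of `b` and `d` with weights `q := 1 - 2m - p` and `m`. Clearing denominators, the equation becomes
the polynomial identity `p (a - d) (q + m) = q (b - d) (p + m)`. At `p = 0` the difference of the two
sides is `-(1 - 2m) m (b - d)` and at `p = 1 - 2m` it is `(1 - 2m) m (a - d)`; these have opposite signs
exactly when `(d - a)(d - b) > 0`, so the intermediate value theorem gives a root in `(0, 1 - 2m)`.
-/

open Set

theorem exists_mem_Ioo_eq_zero_of_mul_neg {f : ℝ → ℝ} {a b : ℝ} (hab : a ≤ b)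
    (hf : ContinuousOn f (Icc a b)) (h : f a * f b < 0) : ∃ c ∈ Ioo a b, f c = 0 := by
  rcases mul_neg_iff.mp h with ⟨ha, hb⟩ | ⟨ha, hb⟩
  · exact intermediate_value_Ioo' hab hf ⟨hb, ha⟩
  · exact intermediate_value_Ioo hab hf ⟨ha, hb⟩

theorem exists_mem_Ioo_mul_eq_mul {a b d L m : ℝ} (h : 0 < (d - a) * (d - b)) (hL : 0 < L)
    (hm : m ≠ 0) :
    ∃ p ∈ Ioo 0 L, p * (a - d) * (L - p + m) = (L - p) * (b - d) * (p + m) := by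
  set φ : ℝ → ℝ := fun p => p * (a - d) * (L - p + m) - (L - p) * (b - d) * (p + m)
  have hφ : φ 0 * φ L < 0 := by
    have : φ 0 * φ L = -(L ^ 2 * m ^ 2 * ((d - a) * (d - b))) := by simp only [φ]; ring
    rw [this, neg_neg_iff_pos]
    positivity
  obtain ⟨p, hp, hφp⟩ :=
    exists_mem_Ioo_eq_zero_of_mul_neg hL.le (by simp only [φ]; fun_prop) hφ
  exact ⟨p, hp, sub_eq_zero.mp hφp⟩

/-- existence of the prior weight `p` equalizing both traders'
conditional expectations, for every `m ∈ (0, 1/2)`. -/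
theorem exists_p_equalizing (a b d : ℝ) (h : (d - a) * (d - b) > 0) :
    ∀ m : ℝ, 0 < m → m < 1 / 2 →
      ∃ p : ℝ, 0 < p ∧ p < 1 - 2 * m ∧
        a * p / (p + m) + d * m / (p + m)
          = b * (1 - p - 2 * m) / (1 - p - m) + d * m / (1 - p - m) := by
  intro m hm hm2
  obtain ⟨p, ⟨hp0, hpL⟩, hp⟩ := exists_mem_Ioo_mul_eq_mul h (by linarith : 0 < 1 - 2 * m) hm.ne'
  refine ⟨p, hp0, hpL, ?_⟩
  have hleft : p + m ≠ 0 := by linarith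
  have hright : 1 - p - m ≠ 0 := by linarith
  rw [← add_div, ← add_div, div_eq_div_iff hleft hright]
  linear_combination hp
end

section
/- Let Ω = {ω_1, ω_2, ω_3, ω_4} and let X: Ω → ℝ be given by X = (0, 1, 0, 1). Let Π_1 be the partition {{ω_1, ω_2}, {ω_3, ω_4}} and Π_2 the partition {{ω_1, ω_4}, {ω_2, ω_3}}. Then Π = (Π_1, Π_2) has the fine-join property, and for every m ∈ (0, 1/2) the prior μ_m = ((1 − 2m)/2, m, (1 − 2m)/2, m) satisfies E_{μ_m}[X | P] = 2m for every cell P of Π_1 and of Π_2; consequently X is non-separable at μ_m under Π with value 2m. -/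
noncomputable section
open scoped Classical
open Finset

/-- The security `(0, 1, 0, 1)` on four states. -/
def X10 : Fin 4 → ℝ := ![0, 1, 0, 1]

/-- Trader 1's partition `{{ω1, ω2}, {ω3, ω4}}` and
trader 2's partition `{{ω1, ω4}, {ω2, ω3}}`, as cell maps. -/
def C10 : Fin 2 → Fin 4 → Set (Fin 4) :=
  ![fun ω => if ω = 0 ∨ ω = 1 then ({0, 1} : Set (Fin 4)) else {2, 3},
    fun ω => if ω = 0 ∨ ω = 3 then ({0, 3} : Set (Fin 4)) else {1, 2}]

/-- The prior `((1 - 2m)/2, m, (1 - 2m)/2, m)`. -/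
def μ10 (m : ℝ) : Fin 4 → ℝ := ![(1 - 2 * m) / 2, m, (1 - 2 * m) / 2, m]

/-- the `(0,1,0,1)` security is non-separable at every prior
`((1-2m)/2, m, (1-2m)/2, m)` with `m ∈ (0, 1/2)`, with value `2m`. -/
theorem zeroOneZeroOne_nonseparable :
    (∀ i, IsPartitionFun (C10 i)) ∧ FineJoin C10 ∧
    ∀ m : ℝ, 0 < m → m < 1 / 2 →
      IsPrior (μ10 m) ∧
      (∀ (i : Fin 2) (ω : Fin 4), condExp (μ10 m) X10 (C10 i ω) = 2 * m) ∧
      NonSeparableAt C10 X10 (μ10 m) (2 * m) := by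
  refine ⟨?_, ?_, ?_⟩
  · intro i
    constructor
    · intro ω; fin_cases i <;> fin_cases ω <;> simp [C10]
    · intro ω ω' h; fin_cases i <;> fin_cases ω <;> fin_cases ω' <;>
        simp_all [C10]
  · intro ω ω' h
    have h0 := h 0
    have h1 := h 1
    fin_cases ω <;> fin_cases ω' <;> simp_all [C10]
  · intro m hm hm'
    have hμ : IsPrior (μ10 m) := by
      constructor
      · intro ω; fin_cases ω <;> simp [μ10] <;> linarith
      · simp [μ10, Fin.sum_univ_four]; ring
    have hc : ∀ (i : Fin 2) (ω : Fin 4), condExp (μ10 m) X10 (C10 i ω) = 2 * m := by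
      intro i ω
      have h1 : (1 - 2 * m) / 2 + m ≠ 0 := by intro h; nlinarith
      have h2 : m + (1 - 2 * m) / 2 ≠ 0 := by intro h; nlinarith
      fin_cases i <;> fin_cases ω <;>
        simp [condExp, C10, μ10, X10, Fin.sum_univ_four, Fin.isValue,
          Set.mem_insert_iff, Set.mem_singleton_iff] <;>
        (rw [div_eq_iff (by assumption)]; ring)
    refine ⟨hμ, hc, ⟨1, ?_, ?_⟩, fun i ω _ => hc i ω⟩
    · show (0:ℝ) < μ10 m 1
      simp [μ10]; exact hm
    · show X10 1 ≠ 2 * m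
      simp [X10]; intro h; linarith
end
end

section
/- Let β ∈ (0, 1), M > 0, let (s̄_k)_{k ≥ 0} be a real sequence with |s̄_k| ≤ M for all k, and let (c̄_k)_{k ≥ 1} be a nonnegative bounded real sequence. For each k ≥ 1 define Ψ_k = ∑_{j=0}^∞ β^j (s̄_{k+j} − s̄_{k+j−1} − c̄_{k+j}) (the series converges absolutely). Then for every K ≥ 1, ∑_{k=1}^K Ψ_k ≤ 2M/(1 − β). -/
/-- the sum of the discounted continuation payoffs `Ψ_k` over
`k = 1, …, K` is bounded by `2M/(1 - β)`. -/
theorem sum_continuation_payoffs_le (β M : ℝ) (hβ0 : 0 < β) (hβ1 : β < 1)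
    (hM : 0 < M) (s c : ℕ → ℝ)
    (hs : ∀ k : ℕ, |s k| ≤ M)
    (hc0 : ∀ k : ℕ, 1 ≤ k → 0 ≤ c k)
    (hcb : ∃ B : ℝ, ∀ k : ℕ, 1 ≤ k → c k ≤ B) :
    ∀ K : ℕ, 1 ≤ K →
      ∑ k ∈ Finset.Icc 1 K,
        (∑' j : ℕ, β ^ j * (s (k + j) - s (k + j - 1) - c (k + j)))
        ≤ 2 * M / (1 - β) := by
  intro K hK
  obtain ⟨B, hB⟩ := hcb
  have hβn : 0 ≤ β := hβ0.le
  have h1β : (0:ℝ) < 1 - β := by linarith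
  have hgeo : Summable (fun j : ℕ => β ^ j) := summable_geometric_of_lt_one hβn hβ1
  -- summability of β^j * s(k+j)
  have hsum : ∀ k : ℕ, Summable (fun j : ℕ => β ^ j * s (k + j)) := by
    intro k
    apply Summable.of_norm
    apply Summable.of_nonneg_of_le (fun j => norm_nonneg _) (fun j => ?_) (hgeo.mul_right M)
    rw [norm_mul, norm_pow, Real.norm_eq_abs, abs_of_nonneg hβn, Real.norm_eq_abs]
    exact mul_le_mul_of_nonneg_left (hs _) (pow_nonneg hβn j)
  set S : ℕ → ℝ := fun k => ∑' j : ℕ, β ^ j * s (k + j) with hSdef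
  have hSbound : ∀ k : ℕ, |S k| ≤ M / (1 - β) := by
    intro k
    have hn : Summable fun j : ℕ => ‖β ^ j * s (k + j)‖ := by
      simpa only [Real.norm_eq_abs] using (hsum k).abs
    have h1 := norm_tsum_le_tsum_norm (f := fun j : ℕ => β ^ j * s (k + j)) hn
    simp only [Real.norm_eq_abs] at h1
    have h2 : (∑' j : ℕ, |β ^ j * s (k + j)|) ≤ ∑' j : ℕ, β ^ j * M := by
      apply Summable.tsum_le_tsum _ ((hsum k).abs) (hgeo.mul_right M)
      intro j
      rw [abs_mul, abs_pow, abs_of_nonneg hβn]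
      exact mul_le_mul_of_nonneg_left (hs _) (pow_nonneg hβn j)
    have h3 : (∑' j : ℕ, β ^ j * M) = M / (1 - β) := by
      rw [tsum_mul_right, tsum_geometric_of_lt_one hβn hβ1]
      field_simp
    linarith [h1.trans (h2.trans_eq h3)]
  -- summability of the Ψ terms
  have hΨsum : ∀ k : ℕ, 1 ≤ k →
      Summable (fun j : ℕ => β ^ j * (s (k + j) - s (k + j - 1) - c (k + j))) := by
    intro k hk
    apply Summable.of_norm
    apply Summable.of_nonneg_of_le (fun j => norm_nonneg _) (fun j => ?_)
      (hgeo.mul_right (M + M + |B|))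
    rw [norm_mul, norm_pow, Real.norm_eq_abs, abs_of_nonneg hβn, Real.norm_eq_abs]
    apply mul_le_mul_of_nonneg_left _ (pow_nonneg hβn j)
    have hkj : 1 ≤ k + j := le_trans hk (Nat.le_add_right k j)
    have hcabs : |c (k + j)| ≤ |B| := by
      rw [abs_of_nonneg (hc0 _ hkj)]
      exact (hB _ hkj).trans (le_abs_self B)
    have b1 := abs_le.mp (hs (k + j))
    have b2 := abs_le.mp (hs (k + j - 1))
    have b3 := abs_le.mp hcabs
    apply abs_le.mpr
    constructor <;> linarith
  -- summability of the difference version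
  have hdsum : ∀ k : ℕ, Summable (fun j : ℕ => β ^ j * s (k + 1 + j) - β ^ j * s (k + j)) :=
    fun k => (hsum (k + 1)).sub (hsum k)
  -- each Ψ_{k+1} ≤ S (k+1) - S k
  have hΨle : ∀ k : ℕ,
      (∑' j : ℕ, β ^ j * (s (k + 1 + j) - s (k + 1 + j - 1) - c (k + 1 + j)))
        ≤ S (k + 1) - S k := by
    intro k
    have key : (∑' j : ℕ, β ^ j * (s (k + 1 + j) - s (k + 1 + j - 1) - c (k + 1 + j)))
        ≤ ∑' j : ℕ, (β ^ j * s (k + 1 + j) - β ^ j * s (k + j)) := by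
      apply Summable.tsum_le_tsum _ (hΨsum (k + 1) (Nat.le_add_left 1 k)) (hdsum k)
      intro j
      have he : k + 1 + j - 1 = k + j := by omega
      rw [he, ← mul_sub]
      apply mul_le_mul_of_nonneg_left _ (pow_nonneg hβn j)
      have : 0 ≤ c (k + 1 + j) := hc0 _ (by omega)
      linarith
    rw [Summable.tsum_sub (hsum (k + 1)) (hsum k)] at key
    exact key
  -- telescoping
  have htel : ∑ k ∈ Finset.Icc 1 K,
      (∑' j : ℕ, β ^ j * (s (k + j) - s (k + j - 1) - c (k + j))) ≤ S K - S 0 := by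
    calc ∑ k ∈ Finset.Icc 1 K,
          (∑' j : ℕ, β ^ j * (s (k + j) - s (k + j - 1) - c (k + j)))
        = ∑ i ∈ Finset.range K,
          (∑' j : ℕ, β ^ j * (s (i + 1 + j) - s (i + 1 + j - 1) - c (i + 1 + j))) := by
          rw [← Finset.Ico_add_one_right_eq_Icc, Finset.sum_Ico_eq_sum_range]
          apply Finset.sum_congr rfl
          intro i _
          rw [add_comm 1 i]
      _ ≤ ∑ i ∈ Finset.range K, (S (i + 1) - S i) :=
          Finset.sum_le_sum fun i _ => hΨle i
      _ = S K - S 0 := Finset.sum_range_sub S K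
  have h0 := hSbound 0
  have hKb := hSbound K
  have heq : 2 * M / (1 - β) = M / (1 - β) + M / (1 - β) := by ring
  have := (abs_le.mp h0).1
  have := (abs_le.mp hKb).2
  linarith
end
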